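/- arXiv:math/0609350 — 2 statements merged into one kernel-verified Lean document; each statement's English description precedes it below -/
import Mathlib

section
/- If Condition A holds (each V_j has a distribution that is absolutely continuous on (0,1), with a point mass at 0 allowed), then Condition B(δ) holds for every δ ≥ 0; in particular φ(it) → 0 as t → ∞. -/
open MeasureTheory ProbabilityTheory Filter Asymptotics Complex Set

noncomputable section

/-- `x ^ z` for real `x ≥ 0` and complex `z`, with the convention `0 ^ z = 0`. -/
def cpow0 (x : ℝ) (z : ℂ) : ℂ := if x = 0 then 0 else (x : ℂ) ^ z

/-- The weight `∏_{i=1}^k V_{j_i}^{(j_1 ⋯ j_{i-1})}` attached to a node of the infinite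
`b`-ary tree.  Nodes are coded as lists of digits, the head being the *last* step, so the
parent of `j :: J` is `J`, and the splitting vector used at node `J` is `W J`. -/
def nodeWeight {b : ℕ} (W : List (Fin b) → Fin b → ℝ) : List (Fin b) → ℝ
  | [] => 1
  | j :: J => nodeWeight W J * W J j

/-- The number of fragmentation events starting from an object of size `x`: the number of
nodes of the fragmentation tree whose piece has size `≥ 1`. -/
def fragCount {b : ℕ} (W : List (Fin b) → Fin b → ℝ) (x : ℝ) : ℕ :=
  Set.ncard {J : List (Fin b) | 1 ≤ x * nodeWeight W J}

/-- The fragmentation count `N(x)` as a random variable, built from a family `W` of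
independent copies of the splitting vector, indexed by the nodes of the tree. -/
def fragN {Ω : Type*} {b : ℕ} (W : List (Fin b) → Fin b → Ω → ℝ) (x : ℝ) (ω : Ω) : ℕ :=
  fragCount (fun J j => W J j ω) x

variable {Ω : Type*} [MeasurableSpace Ω]

/-- `φ(z) = ∑_j E[V_j^z]`, with the convention `0^z = 0`. -/
def phiF (P : Measure Ω) {b : ℕ} (V : Fin b → Ω → ℝ) (z : ℂ) : ℂ :=
  ∑ j, ∫ ω, cpow0 (V j ω) z ∂P

/-- `α = ∑_j E[-V_j ln V_j]`, the expected entropy of the splitting vector. -/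
def alphaF (P : Measure Ω) {b : ℕ} (V : Fin b → Ω → ℝ) : ℝ :=
  ∑ j, ∫ ω, -(V j ω * Real.log (V j ω)) ∂P

/-- `ψ(z,w) = Cov(∑_j V_j^z, ∑_j V_j^w)`. -/
def psiF (P : Measure Ω) {b : ℕ} (V : Fin b → Ω → ℝ) (z w : ℂ) : ℂ :=
  (∫ ω, (∑ j, cpow0 (V j ω) z) * (∑ j, cpow0 (V j ω) w) ∂P) - phiF P V z * phiF P V w

/-- Condition A: each `V_j` has a distribution which is absolutely continuous on `(0,1)`
(a point mass at `0` being allowed). -/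
def ConditionA (P : Measure Ω) {b : ℕ} (V : Fin b → Ω → ℝ) : Prop :=
  ∀ j, (Measure.map (V j) P).restrict (Set.Ioo (0:ℝ) 1) ≪ (volume : Measure ℝ)

/-- The (topological) support of a measure on `Fin b → ℝ`. -/
def measSupport {b : ℕ} (μ : Measure (Fin b → ℝ)) : Set (Fin b → ℝ) :=
  {v | ∀ U : Set (Fin b → ℝ), IsOpen U → v ∈ U → 0 < μ U}

/-- Condition A′: the support of the distribution of `V` on the standard simplex has an
interior point (in the subspace topology of the simplex). -/
def ConditionA' (P : Measure Ω) {b : ℕ} (V : Fin b → Ω → ℝ) : Prop :=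
  ∃ v ∈ stdSimplex ℝ (Fin b), ∃ U : Set (Fin b → ℝ), IsOpen U ∧ v ∈ U ∧
    U ∩ stdSimplex ℝ (Fin b) ⊆ measSupport (Measure.map (fun ω j => V j ω) P)

/-- Condition B(δ): `limsup_{t → ∞} |φ(δ + i t)| < 1`. -/
def ConditionB (P : Measure Ω) {b : ℕ} (V : Fin b → Ω → ℝ) (δ : ℝ) : Prop :=
  Filter.limsup (fun t : ℝ => ‖phiF P V (δ + t * Complex.I)‖) atTop < 1

/-- The minimal `L²` (Wasserstein-2) distance between two laws. -/
def ell2 {E : Type*} [MeasurableSpace E] [NormedAddCommGroup E] (μ ν : Measure E) : ℝ :=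
  sInf {c | ∃ π : Measure (E × E), π.map Prod.fst = μ ∧ π.map Prod.snd = ν ∧
    c = (∫ p, ‖p.1 - p.2‖ ^ 2 ∂π) ^ (1/2 : ℝ)}

end

set_option linter.unusedVariables false

open NNReal ENNReal in
private lemma myRL' (G : ℝ → ℂ) :
    Tendsto (fun t : ℝ => ∫ u : ℝ, Complex.exp (t * u * Complex.I) * G u) atTop (nhds 0) := by
  have hcomp : Tendsto (fun t : ℝ => -(t / (2 * Real.pi))) atTop (cocompact ℝ) := by
    rw [cocompact_eq_atBot_atTop]
    refine Tendsto.mono_right ?_ le_sup_left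
    exact tendsto_neg_atBot_iff.mpr
      (Tendsto.atTop_div_const (by positivity) tendsto_id)
  have := (Real.tendsto_integral_exp_smul_cocompact G).comp hcomp
  refine this.congr fun t => ?_
  refine integral_congr_ae (Eventually.of_forall fun u => ?_)
  simp only [Function.comp, Circle.smul_def, Real.fourierChar_apply]
  congr 1
  congr 1
  push_cast
  have hpi : (2 * Real.pi : ℂ) ≠ 0 := by
    simp [Real.pi_ne_zero]
  field_simp

private lemma my_exp_image_Iio : Real.exp '' Set.Iio (0:ℝ) = Set.Ioo (0:ℝ) 1 := by
  ext x
  constructor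
  · rintro ⟨u, hu, rfl⟩
    exact ⟨Real.exp_pos u, by simpa using Real.exp_lt_one_iff.mpr hu⟩
  · rintro ⟨h0, h1⟩
    exact ⟨Real.log x, Real.log_neg h0 h1, Real.exp_log h0⟩

open NNReal ENNReal in
private lemma my_tendsto_key (ν : Measure ℝ) [IsFiniteMeasure ν] (hac : ν ≪ volume)
    (hnull : ν (Set.Ioo (0:ℝ) 1)ᶜ = 0) (δ : ℝ) :
    Tendsto (fun t : ℝ => ∫ x, Complex.exp ((δ + t * Complex.I) * Real.log x) ∂ν)
      atTop (nhds 0) := by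
  set f : ℝ → ℝ≥0∞ := ν.rnDeriv volume with hf
  have hfmeas : Measurable f := Measure.measurable_rnDeriv ν volume
  have hwd : volume.withDensity f = ν := Measure.withDensity_rnDeriv_eq ν volume hac
  set g : ℝ → ℝ≥0 := fun x => (f x).toNNReal with hg
  have hgmeas : Measurable g := hfmeas.ennreal_toNNReal
  have hwd' : volume.withDensity (fun x => (g x : ℝ≥0∞)) = ν := by
    rw [← hwd]
    refine withDensity_congr_ae ?_
    filter_upwards [Measure.rnDeriv_lt_top ν volume] with x hx
    simp [hg, ENNReal.coe_toNNReal hx.ne]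
    exact ENNReal.coe_toNNReal hx.ne
  have hf0 : ∀ᵐ x ∂(volume : Measure ℝ), x ∉ Set.Ioo (0:ℝ) 1 → g x = 0 := by
    have h1 : ∫⁻ x in (Set.Ioo (0:ℝ) 1)ᶜ, f x ∂volume = 0 := by
      rw [Measure.setLIntegral_rnDeriv hac]
      exact hnull
    have h2 : ∀ᵐ x ∂(volume.restrict (Set.Ioo (0:ℝ) 1)ᶜ), f x = 0 :=
      (lintegral_eq_zero_iff hfmeas).mp h1
    have := (ae_restrict_iff' measurableSet_Ioo.compl).mp h2
    filter_upwards [this] with x hx hx'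
    simp [hg, hx hx']
  set G : ℝ → ℂ := Set.indicator (Set.Iio (0:ℝ))
      (fun u => ((Real.exp u * (g (Real.exp u) : ℝ)) * Complex.exp (δ * u))) with hG
  have key : ∀ t : ℝ, (∫ x, Complex.exp ((δ + t * Complex.I) * Real.log x) ∂ν)
      = ∫ u : ℝ, Complex.exp (t * u * Complex.I) * G u := by
    intro t
    rw [← hwd', integral_withDensity_eq_integral_smul hgmeas]
    have hIoo : (∫ x : ℝ, g x • Complex.exp ((δ + t * Complex.I) * Real.log x))
        = ∫ x in Set.Ioo (0:ℝ) 1, g x • Complex.exp ((δ + t * Complex.I) * Real.log x) := by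
      refine (setIntegral_eq_integral_of_ae_compl_eq_zero ?_).symm
      filter_upwards [hf0] with x hx hx'
      simp [hx hx']
    rw [hIoo, ← my_exp_image_Iio,
      integral_image_eq_integral_abs_deriv_smul measurableSet_Iio
        (fun x _ => (Real.hasDerivAt_exp x).hasDerivWithinAt)
        Real.exp_injective.injOn _]
    rw [← integral_indicator measurableSet_Iio]
    refine integral_congr_ae (Eventually.of_forall fun u => ?_)
    by_cases hu : u ∈ Set.Iio (0:ℝ)
    · simp only [hG, Set.indicator_of_mem hu]
      rw [Real.log_exp, abs_of_pos (Real.exp_pos u)]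
      simp only [NNReal.smul_def, smul_eq_mul, Complex.real_smul]
      rw [show ((δ : ℂ) + t * Complex.I) * u = δ * u + t * u * Complex.I by ring,
        Complex.exp_add]
      push_cast
      ring
    · simp [hG, Set.indicator_of_notMem hu]
  simpa only [key] using myRL' G

private lemma my_cpow0_measurable (z : ℂ) : Measurable (fun x : ℝ => cpow0 x z) := by
  have : (fun x : ℝ => cpow0 x z)
      = fun x : ℝ => if x = 0 then 0 else Complex.exp (Complex.log (x : ℂ) * z) := by
    funext x
    by_cases hx : x = 0
    · simp [cpow0, hx]
    · have hx' : (x : ℂ) ≠ 0 := by exact_mod_cast hx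
      simp [cpow0, hx, Complex.cpow_def_of_ne_zero hx']
  rw [this]
  exact Measurable.ite measurableSet_eq measurable_const
    (Complex.measurable_exp.comp
      ((Complex.measurable_log.comp Complex.measurable_ofReal).mul measurable_const))

private lemma my_term_tendsto {Ω : Type*} [MeasurableSpace Ω] (P : Measure Ω)
    [IsProbabilityMeasure P] (Vj : Ω → ℝ) (hm : Measurable Vj)
    (h0 : ∀ ω, 0 ≤ Vj ω) (hlt : ∀ᵐ ω ∂P, Vj ω < 1)
    (hac : (Measure.map Vj P).restrict (Set.Ioo (0:ℝ) 1) ≪ volume) (δ : ℝ) :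
    Tendsto (fun t : ℝ => ∫ ω, cpow0 (Vj ω) (δ + t * Complex.I) ∂P) atTop (nhds 0) := by
  set μ := Measure.map Vj P with hμ
  have : IsProbabilityMeasure μ := Measure.isProbabilityMeasure_map hm.aemeasurable
  set ν := μ.restrict (Set.Ioo (0:ℝ) 1) with hν
  have hnull : ν (Set.Ioo (0:ℝ) 1)ᶜ = 0 := by
    rw [hν, Measure.restrict_apply measurableSet_Ioo.compl]
    simp
  have hae : ∀ᵐ x ∂μ, x ∈ Set.Ico (0:ℝ) 1 := by
    rw [hμ]
    refine (ae_map_iff hm.aemeasurable measurableSet_Ico).mpr ?_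
    filter_upwards [hlt] with ω h using ⟨h0 ω, h⟩
  have key : ∀ t : ℝ, (∫ ω, cpow0 (Vj ω) (δ + t * Complex.I) ∂P)
      = ∫ x, Complex.exp ((δ + t * Complex.I) * Real.log x) ∂ν := by
    intro t
    set z : ℂ := δ + t * Complex.I with hz
    have e1 : (∫ ω, cpow0 (Vj ω) z ∂P) = ∫ x, cpow0 x z ∂μ :=
      (integral_map hm.aemeasurable (my_cpow0_measurable z).aestronglyMeasurable).symm
    have e2 : (∫ x, cpow0 x z ∂μ) = ∫ x in Set.Ioo (0:ℝ) 1, cpow0 x z ∂μ := by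
      refine (setIntegral_eq_integral_of_ae_compl_eq_zero ?_).symm
      filter_upwards [hae] with x hx hx'
      have hx0 : x = 0 := by
        rcases hx with ⟨hx1, hx2⟩
        by_contra h
        exact hx' ⟨lt_of_le_of_ne hx1 (Ne.symm h), hx2⟩
      simp [cpow0, hx0]
    have e3 : (∫ x in Set.Ioo (0:ℝ) 1, cpow0 x z ∂μ)
        = ∫ x, Complex.exp (z * Real.log x) ∂ν := by
      refine integral_congr_ae ?_
      filter_upwards [ae_restrict_mem measurableSet_Ioo] with x hx
      have hx0 : (0:ℝ) < x := hx.1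
      have hx' : (x : ℂ) ≠ 0 := by exact_mod_cast hx0.ne'
      rw [cpow0, if_neg hx0.ne', Complex.cpow_def_of_ne_zero hx',
        ← Complex.ofReal_log hx0.le, mul_comm]
    rw [e1, e2, e3]
  simpa only [key] using my_tendsto_key ν hac hnull δ


/-- Lemma 2.2.  Condition A implies Condition B(δ) for every δ ≥ 0;
in particular φ(it) → 0 as t → ∞. -/
theorem conditionA_implies_conditionB
    {Ω : Type*} [MeasurableSpace Ω] (P : Measure Ω) [IsProbabilityMeasure P]
    {b : ℕ} (hb : 2 ≤ b)
    (V : Fin b → Ω → ℝ)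
    (hVmeas : ∀ j, Measurable (V j))
    (hV0 : ∀ j ω, 0 ≤ V j ω) (hV1 : ∀ j ω, V j ω ≤ 1)
    (hVsum : ∀ ω, ∑ j, V j ω = 1)
    (hVlt1 : ∀ j, ∀ᵐ ω ∂P, V j ω < 1)
    (hA : ConditionA P V) :
    (∀ δ : ℝ, 0 ≤ δ → ConditionB P V δ) ∧
      Tendsto (fun t : ℝ => phiF P V (t * Complex.I)) atTop (nhds 0) := by
  have hφ : ∀ δ : ℝ, Tendsto (fun t : ℝ => phiF P V (δ + t * Complex.I)) atTop (nhds 0) := by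
    intro δ
    have := tendsto_finset_sum (Finset.univ : Finset (Fin b)) fun j _ =>
      my_term_tendsto P (V j) (hVmeas j) (hV0 j) (hVlt1 j) (hA j) δ
    simpa only [phiF, Finset.sum_const_zero] using this
  constructor
  · intro δ hδ
    have habs : Tendsto (fun t : ℝ => ‖phiF P V (δ + t * Complex.I)‖)
        atTop (nhds 0) := by
      have := (continuous_norm.tendsto 0).comp (hφ δ)
      simpa [Function.comp_def] using this
    unfold ConditionB
    rw [habs.limsup_eq]
    norm_num
  · refine (hφ 0).congr fun t => ?_
    norm_num
end

section
/- If Condition B(δ) holds for some δ > 0, then there are only finitely many roots λ of the characteristic equation φ(λ) = 1 with Re λ ≥ δ. -/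
open MeasureTheory ProbabilityTheory Filter Asymptotics Complex Set
open Topology Metric Bornology

set_option linter.unusedVariables false
set_option linter.unusedSectionVars false
set_option maxHeartbeats 1000000

noncomputable section AuxLemmas

set_option linter.unusedSectionVars false
set_option linter.unusedVariables false

noncomputable section

variable {Ω : Type*} [MeasurableSpace Ω]

/-- real version of phi -/
def phiR (P : Measure Ω) {b : ℕ} (V : Fin b → Ω → ℝ) (σ : ℝ) : ℝ :=
  ∑ j, ∫ ω, (V j ω) ^ σ ∂P

lemma cpow0_abs {x : ℝ} (hx : 0 ≤ x) {z : ℂ} (hz : 0 < z.re) :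
    ‖cpow0 x z‖ = x ^ z.re := by
  rcases eq_or_lt_of_le hx with h | h
  · simp [cpow0, ← h, Real.zero_rpow hz.ne']
  · rw [cpow0, if_neg h.ne', Complex.norm_cpow_eq_rpow_re_of_pos h]

lemma cpow0_measurable (z : ℂ) : Measurable fun x : ℝ => cpow0 x z := by
  have h1 : Measurable fun x : ℝ => (x : ℂ) ^ z := by
    have : (fun x : ℝ => (x : ℂ) ^ z) = fun x : ℝ =>
        if x = 0 then (if z = 0 then 1 else 0) else Complex.exp (Complex.log x * z) := by
      funext x
      rw [Complex.cpow_def]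
      by_cases h : x = 0 <;> simp [h]
    rw [this]
    exact Measurable.ite (measurableSet_eq) measurable_const
      (Complex.measurable_exp.comp ((Complex.measurable_log.comp Complex.measurable_ofReal).mul_const z))
  exact Measurable.ite measurableSet_eq measurable_const h1

lemma cpow0_conj (x : ℝ) (hx : 0 ≤ x) (z : ℂ) :
    cpow0 x ((starRingEnd ℂ) z) = (starRingEnd ℂ) (cpow0 x z) := by
  rcases eq_or_lt_of_le hx with h | h
  · simp [cpow0, ← h]
  · rw [cpow0, cpow0, if_neg h.ne', if_neg h.ne',
      Complex.cpow_def_of_ne_zero (by exact_mod_cast h.ne'),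
      Complex.cpow_def_of_ne_zero (by exact_mod_cast h.ne'), ← Complex.exp_conj]
    congr 1
    rw [map_mul, ← Complex.ofReal_log hx]
    · simp

section Ints

variable (P : Measure Ω) [IsProbabilityMeasure P] {b : ℕ} (V : Fin b → Ω → ℝ)
  (hVmeas : ∀ j, Measurable (V j))
  (hV0 : ∀ j ω, 0 ≤ V j ω) (hV1 : ∀ j ω, V j ω ≤ 1)

include hVmeas hV0 hV1

lemma integrable_rpowV (j : Fin b) {σ : ℝ} (hσ : 0 < σ) :
    Integrable (fun ω => (V j ω) ^ σ) P := by
  refine (integrable_const (1:ℝ)).mono' ?_ ?_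
  · exact ((Real.continuous_rpow_const hσ.le).measurable.comp (hVmeas j)).aestronglyMeasurable
  · refine Eventually.of_forall fun ω => ?_
    rw [Real.norm_eq_abs, _root_.abs_of_nonneg (Real.rpow_nonneg (hV0 j ω) σ)]
    exact Real.rpow_le_one (hV0 j ω) (hV1 j ω) hσ.le

lemma integrable_cpow0V (j : Fin b) {z : ℂ} (hz : 0 < z.re) :
    Integrable (fun ω => cpow0 (V j ω) z) P := by
  refine (integrable_const (1:ℝ)).mono' ?_ ?_
  · exact ((cpow0_measurable z).comp (hVmeas j)).aestronglyMeasurable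
  · refine Eventually.of_forall fun ω => ?_
    rw [cpow0_abs (hV0 j ω) hz]
    exact Real.rpow_le_one (hV0 j ω) (hV1 j ω) hz.le

lemma phiF_abs_le {z : ℂ} (hz : 0 < z.re) :
    ‖phiF P V z‖ ≤ phiR P V z.re := by
  rw [phiF]
  refine le_trans (norm_sum_le _ _) ?_
  refine Finset.sum_le_sum fun j _ => ?_
  refine le_trans (norm_integral_le_integral_norm _) (le_of_eq ?_)
  refine integral_congr_ae (Eventually.of_forall fun ω => ?_)
  simp only [cpow0_abs (hV0 j ω) hz]

lemma phiR_anti {σ σ' : ℝ} (hσ : 0 < σ) (hσ' : σ ≤ σ') :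
    phiR P V σ' ≤ phiR P V σ := by
  refine Finset.sum_le_sum fun j _ => ?_
  refine integral_mono (integrable_rpowV P V hVmeas hV0 hV1 j (lt_of_lt_of_le hσ hσ'))
    (integrable_rpowV P V hVmeas hV0 hV1 j hσ) fun ω => ?_
  rcases eq_or_lt_of_le (hV0 j ω) with h | h
  · rw [← h, Real.zero_rpow (lt_of_lt_of_le hσ hσ').ne', Real.zero_rpow hσ.ne']
  · exact Real.rpow_le_rpow_of_exponent_ge h (hV1 j ω) hσ'

lemma phiR_nonneg {σ : ℝ} (hσ : 0 < σ) : 0 ≤ phiR P V σ := by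
  refine Finset.sum_nonneg fun j _ => ?_
  exact integral_nonneg fun ω => Real.rpow_nonneg (hV0 j ω) σ

end Ints

lemma phiR_tendsto (P : Measure Ω) [IsProbabilityMeasure P] {b : ℕ} (V : Fin b → Ω → ℝ)
    (hVmeas : ∀ j, Measurable (V j))
    (hV0 : ∀ j ω, 0 ≤ V j ω) (hV1 : ∀ j ω, V j ω ≤ 1)
    (hVlt1 : ∀ j, ∀ᵐ ω ∂P, V j ω < 1) :
    Tendsto (fun n : ℕ => phiR P V n) atTop (𝓝 0) := by
  have : Tendsto (fun n : ℕ => ∑ j : Fin b, ∫ ω, (V j ω) ^ (n:ℝ) ∂P) atTop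
      (𝓝 (∑ j : Fin b, (0:ℝ))) := by
    refine tendsto_finset_sum _ fun j _ => ?_
    have h0 : (0:ℝ) = ∫ ω, (0:ℝ) ∂P := by simp
    rw [h0]
    refine tendsto_integral_of_dominated_convergence (fun _ => (1:ℝ)) ?_ (integrable_const 1) ?_ ?_
    · intro n
      exact ((Real.continuous_rpow_const (Nat.cast_nonneg n)).measurable.comp
        (hVmeas j)).aestronglyMeasurable
    · intro n
      refine Eventually.of_forall fun ω => ?_
      rw [Real.norm_eq_abs, _root_.abs_of_nonneg (Real.rpow_nonneg (hV0 j ω) _)]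
      exact Real.rpow_le_one (hV0 j ω) (hV1 j ω) (Nat.cast_nonneg n)
    · filter_upwards [hVlt1 j] with ω hω
      have : (fun n : ℕ => (V j ω) ^ (n:ℝ)) = fun n : ℕ => (V j ω) ^ n := by
        funext n; exact Real.rpow_natCast _ n
      rw [this]
      exact tendsto_pow_atTop_nhds_zero_of_lt_one (hV0 j ω) hω
  simpa [phiR] using this

lemma phiF_conj (P : Measure Ω) {b : ℕ} (V : Fin b → Ω → ℝ)
    (hV0 : ∀ j ω, 0 ≤ V j ω) (z : ℂ) :
    phiF P V ((starRingEnd ℂ) z) = (starRingEnd ℂ) (phiF P V z) := by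
  rw [phiF, phiF, map_sum]
  refine Finset.sum_congr rfl fun j _ => ?_
  rw [← integral_conj]
  refine integral_congr_ae (Eventually.of_forall fun ω => ?_)
  exact cpow0_conj _ (hV0 j ω) z



noncomputable section
variable {Ω : Type*} [MeasurableSpace Ω]

/-- Pointwise derivative of `z ↦ cpow0 x z`. -/
lemma cpow0_hasDerivAt {x : ℝ} (hx0 : 0 ≤ x) (z : ℂ) :
    HasDerivAt (fun w => cpow0 x w) (cpow0 x z * (Real.log x : ℂ)) z := by
  rcases eq_or_lt_of_le hx0 with h | h
  · have h1 : (fun w => cpow0 x w) = fun _ : ℂ => (0:ℂ) := by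
      funext w; simp [cpow0, ← h]
    have h2 : cpow0 x z * (Real.log x : ℂ) = 0 := by simp [cpow0, ← h]
    rw [h1, h2]
    exact hasDerivAt_const _ _
  · have hxne : (x:ℂ) ≠ 0 := by exact_mod_cast h.ne'
    have h1 : (fun w => cpow0 x w) = fun w : ℂ => (x:ℂ) ^ w := by
      funext w; simp [cpow0, h.ne']
    have h2 : cpow0 x z * (Real.log x : ℂ) = (x:ℂ) ^ z * Complex.log x := by
      rw [cpow0, if_neg h.ne', Complex.ofReal_log hx0]
    rw [h1, h2]
    exact (hasStrictDerivAt_const_cpow (Or.inl hxne)).hasDerivAt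

/-- The uniform local bound for the derivative. -/
lemma cpow0_deriv_bound {x : ℝ} (hx0 : 0 ≤ x) (hx1 : x ≤ 1) {r : ℝ} (hr : 0 < r)
    {z : ℂ} (hz : r ≤ z.re) :
    ‖cpow0 x z * (Real.log x : ℂ)‖ ≤ 1 / r := by
  rcases eq_or_lt_of_le hx0 with h | h
  · simp [cpow0, ← h]
    positivity
  · rw [norm_mul, cpow0_abs hx0 (lt_of_lt_of_le hr hz)]
    have hxr : x ^ z.re ≤ x ^ r := by
      rcases eq_or_lt_of_le hx1 with h1 | h1
      · simp [h1]
      · exact Real.rpow_le_rpow_of_exponent_ge h hx1 hz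
    have habs : ‖(Real.log x : ℂ)‖ = |Real.log x| := by
      simp [Complex.norm_real]
    rw [habs]
    calc x ^ z.re * |Real.log x| ≤ x ^ r * |Real.log x| := by
          exact mul_le_mul_of_nonneg_right hxr (abs_nonneg _)
      _ ≤ 1 / r := by
          have hy : 0 < x ^ r := Real.rpow_pos_of_pos h r
          have hy1 : x ^ r ≤ 1 := Real.rpow_le_one hx0 hx1 hr.le
          have hkey : |Real.log (x ^ r) * (x ^ r)| < 1 := Real.abs_log_mul_self_lt _ hy hy1
          rw [Real.log_rpow h, abs_mul, abs_mul, _root_.abs_of_nonneg hr.le,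
            _root_.abs_of_nonneg hy.le] at hkey
          -- hkey : r * |log x| * x^r < 1
          rw [le_div_iff₀ hr]
          nlinarith [abs_nonneg (Real.log x), hy.le]

lemma phiF_differentiableAt (P : Measure Ω) [IsProbabilityMeasure P]
    {b : ℕ} (V : Fin b → Ω → ℝ) (hVmeas : ∀ j, Measurable (V j))
    (hV0 : ∀ j ω, 0 ≤ V j ω) (hV1 : ∀ j ω, V j ω ≤ 1)
    {z₀ : ℂ} (hz₀ : 0 < z₀.re) :
    DifferentiableAt ℂ (phiF P V) z₀ := by
  have hre : ∀ z : ℂ, z ∈ ball z₀ (z₀.re / 2) → z₀.re / 2 ≤ z.re := by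
    intro z hz
    have h1 : |(z - z₀).re| ≤ ‖z - z₀‖ := Complex.abs_re_le_norm _
    rw [mem_ball, Complex.dist_eq] at hz
    have : |z.re - z₀.re| < z₀.re / 2 := by
      simpa [Complex.sub_re] using lt_of_le_of_lt h1 hz
    have := abs_lt.mp this
    linarith [this.1]
  have key : ∀ j : Fin b, HasDerivAt (fun z => ∫ ω, cpow0 (V j ω) z ∂P)
      (∫ ω, cpow0 (V j ω) z₀ * (Real.log (V j ω) : ℂ) ∂P) z₀ := by
    intro j
    have := hasDerivAt_integral_of_dominated_loc_of_deriv_le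
      (F := fun z ω => cpow0 (V j ω) z)
      (F' := fun z ω => cpow0 (V j ω) z * (Real.log (V j ω) : ℂ))
      (x₀ := z₀) (bound := fun _ => 1 / (z₀.re / 2)) (μ := P)
      (s := ball z₀ (z₀.re / 2)) (ball_mem_nhds _ (by positivity))
      (Eventually.of_forall fun z =>
        (((cpow0_measurable z).comp (hVmeas j)).aestronglyMeasurable))
      (integrable_cpow0V P V hVmeas hV0 hV1 j hz₀)
      ((((cpow0_measurable z₀).comp (hVmeas j)).mul
        ((Complex.measurable_ofReal).comp
          (Real.measurable_log.comp (hVmeas j)))).aestronglyMeasurable)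
      (Eventually.of_forall fun ω => fun z hz => ?_)
      (integrable_const _)
      (Eventually.of_forall fun ω => fun z _ => cpow0_hasDerivAt (hV0 j ω) z)
    · exact this.2
    · show ‖cpow0 (V j ω) z * (Real.log (V j ω) : ℂ)‖ ≤ 1 / (z₀.re / 2)
      exact cpow0_deriv_bound (hV0 j ω) (hV1 j ω) (by positivity) (hre z hz)
  have : HasDerivAt (phiF P V)
      (∑ j, ∫ ω, cpow0 (V j ω) z₀ * (Real.log (V j ω) : ℂ) ∂P) z₀ := by
    have := HasDerivAt.fun_sum (fun j (_ : j ∈ (Finset.univ : Finset (Fin b))) => key j)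
    exact this
  exact this.differentiableAt

end

lemma roots_im_bounded {Ω : Type*} [MeasurableSpace Ω] (P : Measure Ω) [IsProbabilityMeasure P]
    {b : ℕ} (V : Fin b → Ω → ℝ) (hVmeas : ∀ j, Measurable (V j))
    (hV0 : ∀ j ω, 0 ≤ V j ω) (hV1 : ∀ j ω, V j ω ≤ 1)
    {δ : ℝ} (hδ : 0 < δ) {c : ℝ} (hc : c < 1) (hc2 : 1/2 ≤ c)
    {T0 : ℝ} (hT00 : 0 ≤ T0)
    (hline : ∀ z : ℂ, z.re = δ → T0 ≤ z.im → ‖phiF P V z‖ ≤ c)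
    {σ1 : ℝ} (hδσ1 : δ < σ1) (hσ2 : phiR P V σ1 ≤ 1/2) :
    ∃ T : ℝ, 0 ≤ T ∧ ∀ lam : ℂ, δ ≤ lam.re → lam.re ≤ σ1 → phiF P V lam = 1 → lam.im ≤ T := by
  classical
  set M : ℝ := max 1 (phiR P V δ) with hMdef
  have hM1 : 1 ≤ M := le_max_left _ _
  have hM0 : 0 < M := lt_of_lt_of_le one_pos hM1
  -- choose m with M * (1/2)^m ≤ 1/2
  obtain ⟨m, hm⟩ : ∃ m : ℕ, (1/2 : ℝ) ^ m < 1 / (2 * M) :=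
    exists_pow_lt_of_lt_one (by positivity) (by norm_num)
  have hm' : M * (1/2 : ℝ) ^ m ≤ 1/2 := by
    have h1 := mul_lt_mul_of_pos_left hm hM0
    have h2 : M * (1 / (2 * M)) = 1/2 := by field_simp
    nlinarith [h1, h2]
  -- choose R
  set ε : ℝ := (1 - c) / (2 * m + 1) with hεdef
  have hε : 0 < ε := by
    apply div_pos (by linarith) (by positivity)
  have hε1 : ε ≤ 1 := by
    rw [hεdef, div_le_one (by positivity)]
    nlinarith [hc2]
  set R : ℝ := max 1 (σ1 / ε) with hRdef
  have hR1 : (1:ℝ) ≤ R := le_max_left _ _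
  have hR0 : 0 < R := lt_of_lt_of_le one_pos hR1
  have hσ10 : 0 < σ1 := lt_trans hδ hδσ1
  have hσ1R : σ1 ≤ ε * R := by
    have := le_max_right 1 (σ1 / ε)
    rw [div_le_iff₀ hε] at this
    linarith [this]
  have hRbound : c < (R / (σ1 + R)) ^ (2*m) := by
    have hbase : 1 - ε ≤ R / (σ1 + R) := by
      rw [le_div_iff₀ (by linarith)]
      nlinarith [hσ1R, hε.le, hσ10.le]
    have hb0 : (0:ℝ) ≤ 1 - ε := by linarith
    have hbern : 1 - (2*m : ℕ) * ε ≤ (1 - ε) ^ (2*m) := by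
      have := one_add_mul_le_pow (a := -ε) (by linarith) (2*m)
      simpa [sub_eq_add_neg, mul_comm] using this
    have hpow : (1 - ε) ^ (2*m) ≤ (R / (σ1 + R)) ^ (2*m) :=
      pow_le_pow_left₀ hb0 hbase _
    have hmε : 1 - (2*m : ℕ) * ε = c + ε := by
      push_cast
      rw [hεdef]
      field_simp
      ring
    calc c < c + ε := by linarith
      _ = 1 - (2*m : ℕ) * ε := hmε.symm
      _ ≤ (1 - ε) ^ (2*m) := hbern
      _ ≤ _ := hpow
  refine ⟨T0 + R, by positivity, fun lam hlre1 hlre2 hroot => ?_⟩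
  by_contra hbig
  push_neg at hbig
  set t : ℝ := lam.im with htdef
  set σ : ℝ := lam.re with hσdef
  -- the auxiliary function
  set w : ℂ → ℂ := fun z => z - (t:ℂ) * Complex.I + (R:ℂ) with hwdef
  have hwre : ∀ z : ℂ, (w z).re = z.re + R := by intro z; simp [hwdef]
  have hwim : ∀ z : ℂ, (w z).im = z.im - t := by intro z; simp [hwdef]
  have hden : ∀ z : ℂ, 0 < z.re → w z ≠ 0 := by
    intro z hz h0
    have : (w z).re = 0 := by rw [h0]; simp
    rw [hwre z] at this
    linarith
  have habs_lb : ∀ z : ℂ, 0 < z.re → z.re + R ≤ ‖w z‖ := by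
    intro z hz
    calc z.re + R = (w z).re := (hwre z).symm
      _ ≤ ‖w z‖ := Complex.re_le_norm _
  set g : ℂ → ℂ := fun z => ((R:ℂ) / w z) ^ (2*m) with hgdef
  set f : ℂ → ℂ := fun z => phiF P V z * g z with hfdef
  have hgabs : ∀ z : ℂ, ‖g z‖ = (R / ‖w z‖) ^ (2*m) := by
    intro z
    rw [hgdef]
    simp only [norm_pow, norm_div, Complex.norm_real, Real.norm_eq_abs, _root_.abs_of_pos hR0]
  have hgle1 : ∀ z : ℂ, 0 < z.re → ‖g z‖ ≤ 1 := by
    intro z hz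
    rw [hgabs z]
    apply pow_le_one₀ (by positivity)
    rw [div_le_one (lt_of_lt_of_le (by linarith) (habs_lb z hz))]
    linarith [habs_lb z hz]
  -- the rectangle
  set U : Set ℂ := Ioo δ σ1 ×ℂ Ioo (t - R) (t + R) with hUdef
  have hUopen : IsOpen U := isOpen_Ioo.reProdIm isOpen_Ioo
  have hUb : IsBounded U := (isBounded_Ioo _ _).reProdIm (isBounded_Ioo _ _)
  have hclU : closure U = Icc δ σ1 ×ℂ Icc (t - R) (t + R) := by
    rw [hUdef, closure_reProdIm, closure_Ioo hδσ1.ne, closure_Ioo (by linarith : t - R ≠ t + R)]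
  have hclUH : ∀ z ∈ closure U, 0 < z.re := by
    intro z hz
    rw [hclU, mem_reProdIm] at hz
    linarith [hz.1.1]
  -- differentiability
  have hphidiff : DifferentiableOn ℂ (phiF P V) {z : ℂ | 0 < z.re} :=
    fun z hz => (phiF_differentiableAt P V hVmeas hV0 hV1 hz).differentiableWithinAt
  have hgdiff : DifferentiableOn ℂ g {z : ℂ | 0 < z.re} := by
    apply DifferentiableOn.pow
    exact DifferentiableOn.div (differentiableOn_const _)
      (((differentiable_id.sub_const _).add_const _).differentiableOn) (fun z hz => hden z hz)
  have hfdiff : DifferentiableOn ℂ f {z : ℂ | 0 < z.re} := hphidiff.mul hgdiff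
  have hfdcc : DiffContOnCl ℂ f U := by
    constructor
    · exact hfdiff.mono (fun z hz => hclUH z (subset_closure hz))
    · exact hfdiff.continuousOn.mono (fun z hz => hclUH z hz)
  -- frontier bound
  have hfrontier : ∀ z ∈ frontier U, ‖f z‖ ≤ c := by
    intro z hz
    rw [hUopen.frontier_eq] at hz
    obtain ⟨hzc, hznU⟩ := hz
    have hzre : 0 < z.re := hclUH z hzc
    rw [hclU, mem_reProdIm] at hzc
    obtain ⟨⟨hre1, hre2⟩, him1, him2⟩ := hzc
    have hphiz : ‖phiF P V z‖ ≤ M := by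
      calc ‖phiF P V z‖ ≤ phiR P V z.re :=
            phiF_abs_le P V hVmeas hV0 hV1 hzre
        _ ≤ phiR P V δ := phiR_anti P V hVmeas hV0 hV1 hδ hre1
        _ ≤ M := le_max_right _ _
    have hnorm : ‖f z‖ = ‖phiF P V z‖ * ‖g z‖ := by
      rw [hfdef]; simp [norm_mul]
    have hcase : z.re = δ ∨ z.re = σ1 ∨ z.im = t - R ∨ z.im = t + R := by
      by_contra hcon
      push_neg at hcon
      exact hznU (by
        rw [hUdef, mem_reProdIm]
        exact ⟨⟨lt_of_le_of_ne hre1 (Ne.symm hcon.1), lt_of_le_of_ne hre2 hcon.2.1⟩,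
          ⟨lt_of_le_of_ne him1 (Ne.symm hcon.2.2.1), lt_of_le_of_ne him2 hcon.2.2.2⟩⟩)
    rcases hcase with hcase | hcase | hcase | hcase
    · -- left edge
      have h1 : ‖phiF P V z‖ ≤ c := by
        apply hline z hcase
        have : T0 + R < t := hbig
        linarith [him1]
      rw [hnorm]
      calc ‖phiF P V z‖ * ‖g z‖ ≤ c * 1 :=
            mul_le_mul h1 (hgle1 z hzre) (norm_nonneg _) (by linarith)
        _ = c := mul_one c
    · -- right edge
      have h1 : ‖phiF P V z‖ ≤ 1/2 := by
        calc ‖phiF P V z‖ ≤ phiR P V z.re :=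
              phiF_abs_le P V hVmeas hV0 hV1 hzre
          _ = phiR P V σ1 := by rw [hcase]
          _ ≤ 1/2 := hσ2
      rw [hnorm]
      calc ‖phiF P V z‖ * ‖g z‖ ≤ (1/2) * 1 :=
            mul_le_mul h1 (hgle1 z hzre) (norm_nonneg _) (by norm_num)
        _ ≤ c := by linarith
    all_goals {
      -- horizontal edges
      have hsq : (z.im - t)^2 = R^2 := by rw [hcase]; ring
      have haz : 0 < ‖w z‖ := lt_of_lt_of_le (by linarith) (habs_lb z hzre)
      have habs2 : 2 * R^2 ≤ (‖w z‖)^2 := by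
        rw [Complex.sq_norm, Complex.normSq_apply, hwre z, hwim z]
        nlinarith [hsq, hzre, hR0]
      have hgz : ‖g z‖ ≤ (1/2) ^ m := by
        rw [hgabs z, pow_mul]
        apply pow_le_pow_left₀ (by positivity)
        rw [div_pow, div_le_iff₀ (by positivity)]
        nlinarith [habs2]
      rw [hnorm]
      calc ‖phiF P V z‖ * ‖g z‖ ≤ M * (1/2)^m :=
            mul_le_mul hphiz hgz (norm_nonneg _) hM0.le
        _ ≤ 1/2 := hm'
        _ ≤ c := hc2
    }
  -- apply the maximum modulus principle
  have hlam_cl : lam ∈ closure U := by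
    rw [hclU, mem_reProdIm]
    constructor
    · exact ⟨hlre1, hlre2⟩
    · constructor <;> [linarith [hbig]; linarith [hbig, hR0]]
  have hmax : ‖f lam‖ ≤ c :=
    Complex.norm_le_of_forall_mem_frontier_norm_le hUb hfdcc hfrontier hlam_cl
  -- lower bound for ‖f lam‖
  have hwlam : w lam = ((σ + R : ℝ) : ℂ) := by
    apply Complex.ext
    · rw [hwre lam]; simp [hσdef]
    · rw [hwim lam]; simp [htdef]
  have hglam : ‖g lam‖ = (R / (σ + R)) ^ (2*m) := by
    rw [hgabs lam, hwlam, Complex.norm_real, Real.norm_eq_abs, _root_.abs_of_pos (by linarith : (0:ℝ) < σ + R)]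
  have hflam : ‖f lam‖ = (R / (σ + R)) ^ (2*m) := by
    rw [hfdef]
    simp only [norm_mul, hroot, norm_one, one_mul]
    exact hglam
  have hmono : (R / (σ1 + R)) ^ (2*m) ≤ (R / (σ + R)) ^ (2*m) := by
    apply pow_le_pow_left₀ (by positivity)
    exact div_le_div_of_nonneg_left hR0.le (by linarith) (by linarith)
  rw [hflam] at hmax
  linarith [hRbound, hmono, hmax]

end
end AuxLemmas

set_option linter.unusedVariables false

/-- Lemma 2.3.  If Condition B(δ) holds for some δ > 0, there are only
finitely many roots λ of φ(λ) = 1 with Re λ ≥ δ. -/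
theorem conditionB_finitely_many_roots
    {Ω : Type*} [MeasurableSpace Ω] (P : Measure Ω) [IsProbabilityMeasure P]
    {b : ℕ} (hb : 2 ≤ b)
    (V : Fin b → Ω → ℝ)
    (hVmeas : ∀ j, Measurable (V j))
    (hV0 : ∀ j ω, 0 ≤ V j ω) (hV1 : ∀ j ω, V j ω ≤ 1)
    (hVsum : ∀ ω, ∑ j, V j ω = 1)
    (hVlt1 : ∀ j, ∀ᵐ ω ∂P, V j ω < 1)
    (δ : ℝ) (hδ : 0 < δ) (hB : ConditionB P V δ) :
    {lam : ℂ | δ ≤ lam.re ∧ phiF P V lam = 1}.Finite := by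
  classical
  have hσδ : ∀ t : ℝ, ((δ:ℂ) + (t:ℂ) * Complex.I).re = δ := by intro t; simp
  -- constants from condition B
  set u : ℝ → ℝ := fun t => ‖phiF P V (δ + t * Complex.I)‖ with hudef
  have hubdd : IsBoundedUnder (· ≤ ·) atTop u := by
    refine isBoundedUnder_of ⟨phiR P V δ, fun t => ?_⟩
    have := phiF_abs_le P V hVmeas hV0 hV1 (z := (δ:ℂ) + (t:ℂ) * Complex.I)
      (by rw [hσδ t]; exact hδ)
    rwa [hσδ t] at this
  have hL : limsup u atTop < 1 := hB
  set c : ℝ := max (1/2) ((limsup u atTop + 1)/2) with hcdef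
  have hc1 : c < 1 := max_lt (by norm_num) (by linarith)
  have hc2 : 1/2 ≤ c := le_max_left _ _
  have hLc : limsup u atTop < c := lt_of_lt_of_le (by linarith) (le_max_right _ _)
  have hev : ∀ᶠ t in atTop, u t < c := eventually_lt_of_limsup_lt hLc hubdd
  obtain ⟨T0', hT0'⟩ := eventually_atTop.mp hev
  set T0 : ℝ := max T0' 0 with hT0def
  have hT00 : (0:ℝ) ≤ T0 := le_max_right _ _
  have hline : ∀ z : ℂ, z.re = δ → T0 ≤ z.im → ‖phiF P V z‖ ≤ c := by
    intro z hzre hzim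
    have hz : z = (δ:ℂ) + (z.im:ℂ) * Complex.I := by
      apply Complex.ext <;> simp [hzre]
    rw [hz]
    exact (hT0' z.im (le_trans (le_max_left _ _) hzim)).le
  -- σ1
  have htend := phiR_tendsto P V hVmeas hV0 hV1 hVlt1
  have hev2 : ∀ᶠ n : ℕ in atTop, phiR P V n < 1/2 :=
    htend.eventually_lt_const (by norm_num)
  obtain ⟨n, hn1, hn2⟩ := (hev2.and (eventually_ge_atTop (⌈δ⌉₊ + 1))).exists
  set σ1 : ℝ := (n : ℝ) with hσ1def
  have hδσ1 : δ < σ1 := by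
    have h1 : δ ≤ (⌈δ⌉₊ : ℝ) := Nat.le_ceil δ
    have h2 : (⌈δ⌉₊ : ℝ) < (n : ℝ) := by
      exact_mod_cast Nat.lt_of_lt_of_le (Nat.lt_succ_self _) hn2
    linarith
  have hσ10 : 0 < σ1 := lt_trans hδ hδσ1
  have hσ2 : phiR P V σ1 ≤ 1/2 := hn1.le
  obtain ⟨T, hT0T, hTroots⟩ :=
    roots_im_bounded P V hVmeas hV0 hV1 hδ hc1 hc2 hT00 hline hδσ1 hσ2
  set S := {lam : ℂ | δ ≤ lam.re ∧ phiF P V lam = 1} with hSdef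
  have hre_le : ∀ lam ∈ S, lam.re ≤ σ1 := by
    rintro lam ⟨h1, h2⟩
    by_contra hgt
    push_neg at hgt
    have hb1 : (1:ℝ) ≤ phiR P V lam.re := by
      have := phiF_abs_le P V hVmeas hV0 hV1 (z := lam) (by linarith)
      rw [h2] at this
      simpa using this
    have hb2 : phiR P V lam.re ≤ phiR P V σ1 :=
      phiR_anti P V hVmeas hV0 hV1 hσ10 hgt.le
    linarith
  have him_ub : ∀ lam ∈ S, lam.im ≤ T := by
    rintro lam ⟨h1, h2⟩
    exact hTroots lam h1 (hre_le lam ⟨h1, h2⟩) h2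
  have him_lb : ∀ lam ∈ S, -T ≤ lam.im := by
    rintro lam ⟨h1, h2⟩
    have hconj : phiF P V ((starRingEnd ℂ) lam) = 1 := by
      rw [phiF_conj P V hV0, h2]; simp
    have hmem : (starRingEnd ℂ) lam ∈ S := by
      refine ⟨by simpa using h1, hconj⟩
    have := him_ub _ hmem
    simp only [Complex.conj_im] at this
    linarith
  have hSK : S ⊆ Icc δ σ1 ×ℂ Icc (-T) T := by
    intro lam hl
    exact mem_reProdIm.mpr ⟨⟨hl.1, hre_le lam hl⟩, ⟨him_lb lam hl, him_ub lam hl⟩⟩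
  have hK : IsCompact (Icc δ σ1 ×ℂ Icc (-T) T) :=
    Metric.isCompact_of_isClosed_isBounded (isClosed_Icc.reProdIm isClosed_Icc)
      ((Metric.isBounded_Icc _ _).reProdIm (Metric.isBounded_Icc _ _))
  by_contra hfin
  have hinf : S.Infinite := hfin
  obtain ⟨z0, hz0K, hacc⟩ := hinf.exists_accPt_of_subset_isCompact hK hSK
  have hz0H : 0 < z0.re := by
    have := (mem_reProdIm.mp hz0K).1.1
    linarith
  have hfreq : ∃ᶠ z in 𝓝[≠] z0, phiF P V z - 1 = 0 := by
    have h1 := accPt_iff_frequently.mp hacc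
    rw [frequently_nhdsWithin_iff]
    exact h1.mono fun z hz => ⟨sub_eq_zero.mpr hz.2.2, hz.1⟩
  have hopen : IsOpen {z : ℂ | 0 < z.re} := isOpen_lt continuous_const Complex.continuous_re
  have hdiffOn : DifferentiableOn ℂ (phiF P V) {z : ℂ | 0 < z.re} :=
    fun z hz => (phiF_differentiableAt P V hVmeas hV0 hV1 hz).differentiableWithinAt
  have hana : AnalyticOnNhd ℂ (fun z => phiF P V z - 1) {z : ℂ | 0 < z.re} :=
    (hdiffOn.sub (differentiableOn_const 1)).analyticOnNhd hopen
  have heq := hana.eqOn_zero_of_preconnected_of_frequently_eq_zero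
    ((convex_halfSpace_re_gt 0).isPreconnected) hz0H hfreq
  have hat : phiF P V ((σ1 : ℝ) : ℂ) - 1 = 0 := heq (by simpa using hσ10)
  have hval : phiF P V ((σ1 : ℝ) : ℂ) = 1 := by
    have := sub_eq_zero.mp hat
    simpa using this
  have hfinal : (1:ℝ) ≤ phiR P V σ1 := by
    have := phiF_abs_le P V hVmeas hV0 hV1 (z := ((σ1:ℝ):ℂ)) (by simpa using hσ10)
    rw [hval] at this
    simpa using this
  linarith
end
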